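/- A Mockingbird term t is a minimal element of the poset of terms ordered by ≼ (equivalently, the only term t' with t' ⇒ t is t itself) if and only if every subterm of t of the form (s ⋆ s), i.e., an application whose two arguments are equal, satisfies s = M. -/

import Mathlib

/-!
Reading a step `t' ⇒ t` backwards replaces one subterm `s ⋆ s` of `t` by `M ⋆ s`, and this
changes `t` exactly when `s ≠ M` (the step `M ⋆ M ⇒ M ⋆ M` is a loop). So `t` has a predecessor
other than itself iff some subterm `s ⋆ s` has `s ≠ M`, and a chain `t' ≼ t` built only from loops
ends where it starts.
-/

/-- Mockingbird terms: the constant `M`, variables `x i`, and applications. -/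
inductive MTerm : Type
  | M : MTerm
  | var : ℕ → MTerm
  | app : MTerm → MTerm → MTerm
  deriving DecidableEq

/-- The one-step rewrite relation `⇒` on Mockingbird terms. -/
inductive Step : MTerm → MTerm → Prop
  | mock (t : MTerm) : Step (MTerm.app MTerm.M t) (MTerm.app t t)
  | left {t1 t1' : MTerm} (t2 : MTerm) :
      Step t1 t1' → Step (MTerm.app t1 t2) (MTerm.app t1' t2)
  | right (t1 : MTerm) {t2 t2' : MTerm} :
      Step t2 t2' → Step (MTerm.app t1 t2) (MTerm.app t1 t2')

/-- `≼`, the reflexive-transitive closure of `⇒`. -/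
def MLe : MTerm → MTerm → Prop := Relation.ReflTransGen Step

/-- `≡`, the reflexive-symmetric-transitive closure of `⇒`. -/
def MEquiv : MTerm → MTerm → Prop := Relation.EqvGen Step

/-- Strict version of `≼`. -/
def MLt (s t : MTerm) : Prop := MLe s t ∧ s ≠ t

/-- Covering relation for `≼`. -/
def MCovBy (s t : MTerm) : Prop := MLt s t ∧ ∀ z, MLt s z → ¬ MLt z t

/-- Duplicative trees: white or black nodes with a list (forest) of children. -/
inductive DTree : Type
  | W : List DTree → DTree
  | B : List DTree → DTree

/-- The one-step relation `⋖` on duplicative forests. -/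
inductive DStep : List DTree → List DTree → Prop
  | dup (g : List DTree) : DStep [DTree.W g] [DTree.B (g ++ g)]
  | white {g g' : List DTree} : DStep g g' → DStep [DTree.W g] [DTree.W g']
  | black {g g' : List DTree} : DStep g g' → DStep [DTree.B g] [DTree.B g']
  | head {t t' : DTree} (f : List DTree) : DStep [t] [t'] → DStep (t :: f) (t' :: f)
  | tail (t : DTree) {f f' : List DTree} : DStep f f' → DStep (t :: f) (t :: f')

/-- `≪`, the reflexive-transitive closure of `⋖`. -/
def DLe : List DTree → List DTree → Prop := Relation.ReflTransGen DStep

/-- The map `fr` from Mockingbird terms to duplicative forests. -/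
def fr : MTerm → List DTree
  | MTerm.M => []
  | MTerm.var _ => []
  | MTerm.app MTerm.M MTerm.M => [DTree.B []]
  | MTerm.app MTerm.M t' => [DTree.W (fr t')]
  | MTerm.app t t' => [DTree.B (fr t ++ fr t')]

mutual
  /-- The pruning map on duplicative trees (returns a forest). -/
  def prT : DTree → List DTree
    | DTree.W g => [DTree.W (prF g)]
    | DTree.B g => prF g
  /-- The pruning map on duplicative forests. -/
  def prF : List DTree → List DTree
    | [] => []
    | t :: f => prT t ++ prF f
end

mutual
  /-- The statistic `mtStat` on duplicative trees. -/
  def mtStat : DTree → ℕ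
    | DTree.W g => 2 * ml g
    | DTree.B g => ml g
  /-- Sum of `mtStat` over the trees of a forest. -/
  def mtsum : List DTree → ℕ
    | [] => 0
    | t :: f => mtStat t + mtsum f
  /-- The statistic `ml` on duplicative forests: `1 - ℓ + Σ mtStat`. -/
  def ml : List DTree → ℕ
    | f => mtsum f + 1 - f.length
end

mutual
  /-- Number of white nodes in a duplicative tree. -/
  def whitesT : DTree → ℕ
    | DTree.W g => 1 + whitesF g
    | DTree.B g => whitesF g
  /-- Number of white nodes in a duplicative forest. -/
  def whitesF : List DTree → ℕ
    | [] => 0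
    | t :: f => whitesT t + whitesF f
end

/-- Closed terms: no variables. -/
def MClosed : MTerm → Prop
  | MTerm.M => True
  | MTerm.var _ => False
  | MTerm.app a b => MClosed a ∧ MClosed b

/-- Degree: number of applications. -/
def deg : MTerm → ℕ
  | MTerm.M => 0
  | MTerm.var _ => 0
  | MTerm.app a b => deg a + deg b + 1

/-- Subterm relation. -/
inductive Subterm : MTerm → MTerm → Prop
  | refl (t : MTerm) : Subterm t t
  | left {s a : MTerm} (b : MTerm) : Subterm s a → Subterm s (MTerm.app a b)
  | right (a : MTerm) {s b : MTerm} : Subterm s b → Subterm s (MTerm.app a b)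

/-- The term `r_d`. -/
def rTerm : ℕ → MTerm
  | 0 => MTerm.M
  | d + 1 => MTerm.app MTerm.M (rTerm d)

/-- Saturated chain from `a` to `b`, given as the list of its elements. -/
def SatChain (a b : MTerm) (c : List MTerm) : Prop :=
  List.Chain' MCovBy c ∧ c.head? = some a ∧ c.getLast? = some b

theorem Relation.ReflTransGen.eq_of_forall_rel_eq {α : Type*} {r : α → α → Prop} {a b : α}
    (h : Relation.ReflTransGen r a b) (hb : ∀ c, r c b → c = b) : a = b := by
  induction h using Relation.ReflTransGen.head_induction_on with
  | refl => rfl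
  | head hac _ hcb =>
    subst hcb
    exact hb _ hac

theorem Step.eq_of_forall_subterm_app_self {t' t : MTerm} (h : Step t' t)
    (ht : ∀ s, Subterm (MTerm.app s s) t → s = MTerm.M) : t' = t := by
  induction h with
  | mock s => rw [ht s (Subterm.refl _)]
  | left b _ ih => rw [ih fun s hs => ht s (Subterm.left b hs)]
  | right a _ ih => rw [ih fun s hs => ht s (Subterm.right a hs)]

theorem Subterm.exists_step_ne {u t : MTerm} (hut : Subterm u t) {u' : MTerm} (h : Step u' u)
    (hne : u' ≠ u) : ∃ t', Step t' t ∧ t' ≠ t := by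
  induction hut with
  | refl => exact ⟨u', h, hne⟩
  | left b _ ih =>
    obtain ⟨a', ha, hne⟩ := ih h hne
    exact ⟨MTerm.app a' b, Step.left b ha, fun h ↦ hne (MTerm.app.inj h).1⟩
  | right a _ ih =>
    obtain ⟨b', hb, hne⟩ := ih h hne
    exact ⟨MTerm.app a b', Step.right a hb, fun h ↦ hne (MTerm.app.inj h).2⟩

/-- a term `t` is minimal for `≼` iff every subterm of the form `s ⋆ s`
satisfies `s = M`. -/
theorem mockingbird_minimal_iff (t : MTerm) :
    (∀ t', MLe t' t → t' = t) ↔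
      (∀ s, Subterm (MTerm.app s s) t → s = MTerm.M) := by
  constructor
  · intro hmin s hs
    by_contra hsM
    have hmock : MTerm.app MTerm.M s ≠ MTerm.app s s := fun h ↦ hsM (MTerm.app.inj h).1.symm
    obtain ⟨t', hstep, hne⟩ := hs.exists_step_ne (Step.mock s) hmock
    exact hne (hmin t' (Relation.ReflTransGen.single hstep))
  · intro ht t' hle
    exact hle.eq_of_forall_rel_eq fun _ h ↦ h.eq_of_forall_subterm_app_self ht
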